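/- Let U be an n-dimensional 𝔽_q-subspace of a k-dimensional 𝔽_{q^m}-vector space 𝕍(k,q^m) such that w_U(H) < n−1 for every 𝔽_{q^m}-hyperplane H of 𝕍(k,q^m), and let U^d be a Delsarte dual of U. Assume that U is h-scattered and let ε = ε_U(t_{s−1}) be its maximum non-trivial defect (the last defect before n−k in the sequence of maximum non-zero defects of U). Then U^d is an (n−k−ε−1)-scattered subspace of 𝕍(n−k,q^m). In particular, if ε < n−k−1, then U^d is scattered. -/

import Mathlib

/-!
If an `r`-dimensional `T ≤ V ⧸ Γ^⊥` met `U^d` in more than `r` dimensions, its preimage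
`S ⊇ Γ^⊥` would contain `r + 1` vectors of `W` that are `𝔽_q`-independent, hence
`𝔽_{q^m}`-independent because `W` is a subgeometry. Their span `N` satisfies
`S^⊥ ≤ N^⊥ ⊓ Γ`, so `N^⊥` maps into a hyperplane `T'` of `V ⧸ Γ`. As `σ` is `𝔽_q`-valued on
`W`, at least `n − r − 1` dimensions of `W` are orthogonal to `N`, and `Γ ∩ W = 0` embeds them
into `U ∩ T'`. Hence `ε_U(k − 1) ≥ n − r − k`, which is impossible for `r ≤ n − k − ε − 1`.
-/

/-- The weight of the `𝔽_{q^m}`-subspace `T` with respect to the `𝔽_q`-subspace `U`: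
`w_U(T) = dim_{𝔽_q}(U ∩ T)`. -/
noncomputable def wt {K L V : Type*} [Field K] [Field L] [Algebra K L]
    [AddCommGroup V] [Module K V] [Module L V] [IsScalarTower K L V]
    (U : Submodule K V) (T : Submodule L V) : ℕ :=
  Module.finrank K ↥(U ⊓ T.restrictScalars K)

/-- The defect of `T` with respect to `U`: `ε_U(T) = w_U(T) − dim_{𝔽_{q^m}}(T)`. -/
noncomputable def defect {K L V : Type*} [Field K] [Field L] [Algebra K L]
    [AddCommGroup V] [Module K V] [Module L V] [IsScalarTower K L V]
    (U : Submodule K V) (T : Submodule L V) : ℤ :=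
  (wt U T : ℤ) - Module.finrank L ↥T

/-- `ε_U(r)`: the maximum defect of `r`-dimensional `𝔽_{q^m}`-subspaces w.r.t. `U`. -/
noncomputable def maxDefect {K V : Type*} (L : Type*) [Field K] [Field L] [Algebra K L]
    [AddCommGroup V] [Module K V] [Module L V] [IsScalarTower K L V]
    (U : Submodule K V) (r : ℕ) : ℤ :=
  sSup {e : ℤ | ∃ T : Submodule L V, Module.finrank L ↥T = r ∧ e = defect U T}

open Module Submodule

section RankNullity

variable {R M N : Type*} [DivisionRing R] [AddCommGroup M] [Module R M]
  [AddCommGroup N] [Module R N]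

theorem Submodule.finrank_map_add_finrank_inf_ker (f : M →ₗ[R] N) (P : Submodule R M)
    [FiniteDimensional R P] :
    finrank R (P.map f) + finrank R ↥(P ⊓ LinearMap.ker f) = finrank R P := by
  rw [← LinearMap.range_domRestrict, ← LinearMap.finrank_range_add_finrank_ker (f.domRestrict P),
    LinearMap.ker_domRestrict, ← finrank_map_subtype_eq, map_comap_subtype]

theorem Submodule.finrank_comap_mkQ [FiniteDimensional R M] (Q : Submodule R M)
    (X : Submodule R (M ⧸ Q)) : finrank R (X.comap Q.mkQ) = finrank R X + finrank R Q := by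
  have hQ : X.comap Q.mkQ ⊓ LinearMap.ker Q.mkQ = Q := by
    rw [ker_mkQ, inf_eq_right]
    exact le_comap_mkQ Q X
  rw [← finrank_map_add_finrank_inf_ker Q.mkQ, hQ, map_comap_eq_of_surjective Q.mkQ_surjective]

theorem Submodule.exists_le_finrank_eq [FiniteDimensional R M] (Q : Submodule R M) {r : ℕ}
    (hQr : finrank R Q ≤ r) (hr : r ≤ finrank R M) :
    ∃ T : Submodule R M, Q ≤ T ∧ finrank R T = r := by
  obtain ⟨f, hf⟩ := exists_linearIndependent_of_le_finrank (R := R) (M := M ⧸ Q)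
    (n := r - finrank R Q) (by rw [finrank_quotient]; omega)
  refine ⟨(span R (Set.range f)).comap Q.mkQ, ?_, ?_⟩
  · exact le_comap_mkQ Q _
  · rw [finrank_comap_mkQ, finrank_span_eq_card hf, Fintype.card_fin]
    omega

end RankNullity

section Subgeometry

variable {K L V : Type*} [Field K] [Field L] [Algebra K L] [AddCommGroup V] [Module K V]
  [Module L V] [IsScalarTower K L V]

theorem finrank_span_le_finrank (X : Submodule K V) [FiniteDimensional K X] :
    finrank L (span L (X : Set V)) ≤ finrank K X := by
  let b := Module.finBasis K X
  have hX : span K (Set.range (X.subtype ∘ b)) = X := by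
    rw [Set.range_comp, ← map_span, b.span_eq, Submodule.map_top, range_subtype]
  calc finrank L (span L (X : Set V))
      = finrank L (span L (Set.range (X.subtype ∘ b))) := by
        rw [← span_span_of_tower K L (Set.range (X.subtype ∘ b)), hX]
    _ ≤ finrank K X := (finrank_range_le_card _).trans_eq (Fintype.card_fin _)

theorem finrank_span_eq_finrank_of_le [FiniteDimensional L V] {W X : Submodule K V}
    [FiniteDimensional K W] (hW : finrank L (span L (W : Set V)) = finrank K W) (hXW : X ≤ W) :
    finrank L (span L (X : Set V)) = finrank K X := by
  obtain ⟨Y, hY⟩ := Submodule.exists_isCompl (X.comap W.subtype)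
  set X' := Y.map W.subtype
  have hX'W : X' ≤ W := map_subtype_le W Y
  have := finiteDimensional_of_le hXW
  have := finiteDimensional_of_le hX'W
  have hsup : span K ((X : Set V) ∪ X') = W := by
    rw [span_union, span_eq, span_eq, ← inf_eq_right.2 hXW, ← map_comap_subtype, ← Submodule.map_sup,
      hY.sup_eq_top, Submodule.map_top, range_subtype]
  have hdim : finrank K X + finrank K X' = finrank K W := by
    rw [← inf_eq_right.2 hXW, ← map_comap_subtype, finrank_map_subtype_eq,
      finrank_map_subtype_eq, finrank_add_eq_of_isCompl hY]
  have hspan : finrank K W ≤ finrank L (span L (X : Set V)) + finrank K X' :=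
    calc finrank K W = finrank L ↥(span L (X : Set V) ⊔ span L (X' : Set V)) := by
          rw [← span_union, ← span_span_of_tower K, hsup, hW]
      _ ≤ finrank L (span L (X : Set V)) + finrank L (span L (X' : Set V)) :=
          finrank_add_le_finrank_add_finrank _ _
      _ ≤ finrank L (span L (X : Set V)) + finrank K X' :=
          Nat.add_le_add_left (finrank_span_le_finrank X') _
  have := finrank_span_le_finrank (L := L) X
  omega

theorem LinearIndependent.of_mem_of_finrank_span_eq [FiniteDimensional L V]
    {W : Submodule K V} [FiniteDimensional K W]
    (hW : finrank L (span L (W : Set V)) = finrank K W) {ι : Type*} [Fintype ι] {v : ι → V}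
    (hv : LinearIndependent K v) (hvW : ∀ i, v i ∈ W) : LinearIndependent L v := by
  have hXW : span K (Set.range v) ≤ W := span_le.2 (Set.range_subset_iff.2 hvW)
  rw [linearIndependent_iff_card_eq_finrank_span, Set.finrank, ← span_span_of_tower K,
    finrank_span_eq_finrank_of_le hW hXW, finrank_span_eq_card hv]

theorem finrank_le_card_add_finrank_inf_orthogonal (σ : LinearMap.BilinForm L V)
    (W : Submodule K V) [FiniteDimensional K W] {ι : Type*} [Fintype ι] (v : ι → V)
    (hv : ∀ i, ∀ w ∈ W, σ (v i) w ∈ (algebraMap K L).range) :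
    finrank K W ≤ Fintype.card ι +
      finrank K ↥(W ⊓ (σ.orthogonal (span L (Set.range v))).restrictScalars K) := by
  let φ : V →ₗ[K] ι → L := LinearMap.pi fun i => (σ (v i)).restrictScalars K
  have hrange : W.map φ ≤ LinearMap.range ((Algebra.linearMap K L).compLeft ι) := by
    rintro _ ⟨w, hw, rfl⟩
    choose a ha using fun i => hv i w hw
    exact ⟨a, funext ha⟩
  have hker : LinearMap.ker φ ≤ (σ.orthogonal (span L (Set.range v))).restrictScalars K := by
    intro w hw x hx
    have hvw : span L (Set.range v) ≤ LinearMap.ker (σ.flip w) :=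
      span_le.2 (Set.range_subset_iff.2 fun i => congrFun hw i)
    exact hvw hx
  calc finrank K W = finrank K (W.map φ) + finrank K ↥(W ⊓ LinearMap.ker φ) :=
        (finrank_map_add_finrank_inf_ker φ W).symm
    _ ≤ Fintype.card ι +
          finrank K ↥(W ⊓ (σ.orthogonal (span L (Set.range v))).restrictScalars K) := by
        gcongr
        · exact (finrank_mono hrange).trans
            ((LinearMap.finrank_range_le _).trans_eq (finrank_fintype_fun_eq_card K))
        · exact finrank_mono (inf_le_inf_left W hker)

end Subgeometry

section Orthogonal

variable {L V : Type*} [Field L] [AddCommGroup V] [Module L V] [FiniteDimensional L V]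
  {σ : LinearMap.BilinForm L V}

open LinearMap.BilinForm in
theorem finrank_map_mkQ_orthogonal_add_le (hσnd : σ.Nondegenerate) (hσrefl : σ.IsRefl)
    {Γ N S : Submodule L V} (hΓS : σ.orthogonal Γ ≤ S) (hNS : N ≤ S) :
    finrank L ((σ.orthogonal N).map Γ.mkQ) + finrank L N ≤ finrank L S := by
  have hrank := finrank_map_add_finrank_inf_ker Γ.mkQ (σ.orthogonal N)
  rw [ker_mkQ] at hrank
  have hSΓ : σ.orthogonal S ≤ Γ := by
    have h := orthogonal_le (B := σ) hΓS
    rwa [orthogonal_orthogonal hσnd hσrefl] at h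
  have hle := finrank_mono (le_inf (orthogonal_le hNS) hSΓ)
  rw [finrank_orthogonal hσnd] at hle hrank
  have := finrank_le N
  have := finrank_le S
  omega

end Orthogonal

section Weight

variable {K L V V' : Type*} [Field K] [Field L] [Algebra K L] [AddCommGroup V] [Module K V]
  [Module L V] [IsScalarTower K L V] [AddCommGroup V'] [Module K V'] [Module L V']
  [IsScalarTower K L V']

theorem wt_le_finrank (U : Submodule K V) [FiniteDimensional K U] (T : Submodule L V) :
    wt U T ≤ finrank K U :=
  finrank_mono inf_le_left

theorem defect_le_maxDefect (U : Submodule K V) [FiniteDimensional K U] (T : Submodule L V) :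
    defect U T ≤ maxDefect L U (finrank L T) := by
  refine le_csSup ⟨finrank K U, ?_⟩ ⟨T, rfl, rfl⟩
  rintro _ ⟨T', -, rfl⟩
  have := wt_le_finrank U T'
  unfold defect
  omega

theorem wt_map_le_finrank_inf_comap (f : V →ₗ[L] V') (W : Submodule K V)
    [FiniteDimensional K W] (T : Submodule L V') :
    wt (W.map (f.restrictScalars K)) T ≤ finrank K ↥(W ⊓ (T.comap f).restrictScalars K) := by
  unfold wt
  rw [map_inf_eq_map_inf_comap]
  exact finrank_map_le _ _

theorem finrank_inf_le_wt_map (f : V →ₗ[L] V') {W : Submodule K V} [FiniteDimensional K W]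
    (hW : (LinearMap.ker f).restrictScalars K ⊓ W = ⊥) {X : Submodule L V}
    {T : Submodule L V'} (hXT : X.map f ≤ T) :
    finrank K ↥(W ⊓ X.restrictScalars K) ≤ wt (W.map (f.restrictScalars K)) T := by
  have hinj := finrank_map_add_finrank_inf_ker (f.restrictScalars K) (W ⊓ X.restrictScalars K)
  have hker : W ⊓ X.restrictScalars K ⊓ LinearMap.ker (f.restrictScalars K) = ⊥ :=
    eq_bot_iff.2 fun x hx => hW.le ⟨hx.2, hx.1.1⟩
  rw [hker, finrank_bot, add_zero] at hinj
  rw [← hinj]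
  exact finrank_mono (le_inf (map_mono inf_le_left)
    (fun _ ⟨x, hx, hfx⟩ => hXT ⟨x, hx.2, hfx⟩))

end Weight

section DelsarteDual

variable {K L V : Type*} [Field K] [Field L] [Algebra K L] [AddCommGroup V] [Module K V]
  [Module L V] [IsScalarTower K L V] [FiniteDimensional L V]

theorem exists_hyperplane_wt_ge_of_lt_wt_delsarteDual {σ : LinearMap.BilinForm L V}
    (hσnd : σ.Nondegenerate) (hσrefl : σ.IsRefl) {W : Submodule K V} [FiniteDimensional K W]
    (hWspan : finrank L (span L (W : Set V)) = finrank K W)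
    (hσW : ∀ x ∈ W, ∀ y ∈ W, σ x y ∈ (algebraMap K L).range)
    {Γ : Submodule L V} (hΓW : Γ.restrictScalars K ⊓ W = ⊥)
    {T : Submodule L (V ⧸ σ.orthogonal Γ)}
    (hT : finrank L T < wt (W.map ((σ.orthogonal Γ).mkQ.restrictScalars K)) T) :
    ∃ T' : Submodule L (V ⧸ Γ), finrank L T' + 1 = finrank L (V ⧸ Γ) ∧
      finrank K W ≤ wt (W.map (Γ.mkQ.restrictScalars K)) T' + finrank L T + 1 := by
  set r := finrank L T
  set S := T.comap (σ.orthogonal Γ).mkQ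
  have hWS : r + 1 ≤ finrank K ↥(W ⊓ S.restrictScalars K) :=
    hT.trans_le (wt_map_le_finrank_inf_comap _ W T)
  obtain ⟨v, hv⟩ := exists_linearIndependent_of_le_finrank hWS
  set u : Fin (r + 1) → V := fun i => v i
  have huL : LinearIndependent L u :=
    (hv.map' _ (ker_subtype _)).of_mem_of_finrank_span_eq hWspan fun i => (v i).2.1
  set N := span L (Set.range u)
  have hNS : N ≤ S := span_le.2 (Set.range_subset_iff.2 fun i => (v i).2.2)
  have hQ := finrank_map_mkQ_orthogonal_add_le hσnd hσrefl (le_comap_mkQ _ T) hNS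
  rw [finrank_span_eq_card huL, Fintype.card_fin, finrank_comap_mkQ,
    LinearMap.BilinForm.finrank_orthogonal hσnd, ← finrank_quotient] at hQ
  obtain ⟨T', hQT', hT'⟩ := exists_le_finrank_eq ((σ.orthogonal N).map Γ.mkQ)
    (r := finrank L (V ⧸ Γ) - 1) (by omega) (by omega)
  refine ⟨T', by omega, ?_⟩
  have hW : finrank K W ≤ r + 1 + finrank K ↥(W ⊓ (σ.orthogonal N).restrictScalars K) := by
    simpa using finrank_le_card_add_finrank_inf_orthogonal σ W u
      fun i w hw => hσW _ (v i).2.1 w hw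
  have hwt := finrank_inf_le_wt_map Γ.mkQ (by rwa [ker_mkQ]) hQT'
  omega

end DelsarteDual

theorem statement11_general {K L Vn : Type*} [Field K] [Field L] [Algebra K L]
    [AddCommGroup Vn] [Module K Vn] [Module L Vn] [IsScalarTower K L Vn]
    [FiniteDimensional L Vn]
    (n k : ℕ) (hkn : k < n)
    (hVn : Module.finrank L Vn = n)
    (W : Submodule K Vn) (hW : Module.finrank K ↥W = n)
    (hWstar : Module.finrank L ↥(Submodule.span L (W : Set Vn)) = n)
    (σ : Vn →ₗ[L] Vn →ₗ[L] L)
    (hσnd : LinearMap.BilinForm.Nondegenerate σ)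
    (hσrefl : LinearMap.IsRefl σ)
    (hσW : ∀ x ∈ W, ∀ y ∈ W, σ x y ∈ (algebraMap K L).range)
    (Γ : Submodule L Vn) (hΓ : Module.finrank L ↥Γ = n - k)
    (hΓW : Γ.restrictScalars K ⊓ W = ⊥)
    (U : Submodule K (Vn ⧸ Γ)) (hU : U = Submodule.map (Γ.mkQ.restrictScalars K) W)
    (Ud : Submodule K (Vn ⧸ LinearMap.BilinForm.orthogonal σ Γ))
    (hUd : Ud = Submodule.map ((LinearMap.BilinForm.orthogonal σ Γ).mkQ.restrictScalars K) W)
    -- `ε = ε_U(t_{s−1}) = ε_U(k−1)` is the maximum non-trivial defect of `U`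
    (ε : ℕ) (hε : maxDefect L U (k - 1) = (ε : ℤ)) (hεlt : ε < n - k) :
    -- `U^d` is `(n−k−ε−1)`-scattered
    (∀ T : Submodule L (Vn ⧸ LinearMap.BilinForm.orthogonal σ Γ),
      Module.finrank L ↥T = n - k - ε - 1 → wt Ud T ≤ n - k - ε - 1) ∧
    -- in particular, if `ε < n−k−1` then `U^d` is scattered
    (ε < n - k - 1 →
      ∀ T : Submodule L (Vn ⧸ LinearMap.BilinForm.orthogonal σ Γ),
        Module.finrank L ↥T = 1 → wt Ud T ≤ 1) := by
  have : FiniteDimensional K W := Module.finite_of_finrank_pos (by omega)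
  have hquot : finrank L (Vn ⧸ Γ) = k := by rw [finrank_quotient, hΓ, hVn]; omega
  have hdual : ∀ T : Submodule L (Vn ⧸ LinearMap.BilinForm.orthogonal σ Γ),
      finrank L T + k + ε < n → wt Ud T ≤ finrank L T := by
    intro T hT
    by_contra! hlt
    subst hU hUd
    obtain ⟨T', hT'dim, hT'wt⟩ := exists_hyperplane_wt_ge_of_lt_wt_delsarteDual hσnd hσrefl
      (hWstar.trans hW.symm) hσW hΓW hlt
    have hdef := defect_le_maxDefect (W.map (Γ.mkQ.restrictScalars K)) T'
    rw [show finrank L T' = k - 1 by omega, hε] at hdef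
    unfold defect at hdef
    omega
  exact ⟨fun T hT => hT ▸ hdual T (by omega), fun hε1 T hT => hT ▸ hdual T (by omega)⟩

/-- Theorem 1.35: the Delsarte dual of an `h`-scattered subspace with maximum
non-trivial defect `ε = ε_U(t_{s−1})` (which, as every hyperplane has weight
`< n−1`, equals `ε_U(k−1)`) is `(n−k−ε−1)`-scattered. -/
theorem statement11 {K L Vn : Type*} [Field K] [Field L] [Algebra K L]
    [Fintype K] [Fintype L]
    [AddCommGroup Vn] [Module K Vn] [Module L Vn] [IsScalarTower K L Vn]
    [FiniteDimensional L Vn]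
    (m n k : ℕ) (hm : 0 < m) (hk : 0 < k) (hkn : k < n)
    (hmL : Module.finrank K L = m) (hVn : Module.finrank L Vn = n)
    (W : Submodule K Vn) (hW : Module.finrank K ↥W = n)
    (hWstar : Module.finrank L ↥(Submodule.span L (W : Set Vn)) = n)
    (σ : Vn →ₗ[L] Vn →ₗ[L] L)
    (hσnd : LinearMap.BilinForm.Nondegenerate σ)
    (hσrefl : LinearMap.IsRefl σ)
    (hσW : ∀ x ∈ W, ∀ y ∈ W, σ x y ∈ (algebraMap K L).range)
    (hσ'nd : ∀ x ∈ W, (∀ y ∈ W, σ x y = 0) → x = 0)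
    (Γ : Submodule L Vn) (hΓ : Module.finrank L ↥Γ = n - k)
    (hΓW : Γ.restrictScalars K ⊓ W = ⊥)
    (U : Submodule K (Vn ⧸ Γ)) (hU : U = Submodule.map (Γ.mkQ.restrictScalars K) W)
    (hUdim : Module.finrank K ↥U = n)
    (Ud : Submodule K (Vn ⧸ LinearMap.BilinForm.orthogonal σ Γ))
    (hUd : Ud = Submodule.map ((LinearMap.BilinForm.orthogonal σ Γ).mkQ.restrictScalars K) W)
    -- every hyperplane of `𝕍(k,q^m)` has weight `< n − 1` w.r.t. `U`
    (hhyp : ∀ H : Submodule L (Vn ⧸ Γ),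
      Module.finrank L ↥H + 1 = k → wt U H + 1 < n)
    -- `U` is `h`-scattered
    (h : ℕ) (hh1 : 1 ≤ h) (hhk : h ≤ k)
    (hscat : ∀ T : Submodule L (Vn ⧸ Γ), Module.finrank L ↥T = h → wt U T ≤ h)
    -- `ε = ε_U(t_{s−1}) = ε_U(k−1)` is the maximum non-trivial defect of `U`
    (ε : ℕ) (hε : maxDefect L U (k - 1) = (ε : ℤ)) (hεlt : ε < n - k) :
    -- `U^d` is `(n−k−ε−1)`-scattered
    (∀ T : Submodule L (Vn ⧸ LinearMap.BilinForm.orthogonal σ Γ),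
      Module.finrank L ↥T = n - k - ε - 1 → wt Ud T ≤ n - k - ε - 1) ∧
    -- in particular, if `ε < n−k−1` then `U^d` is scattered
    (ε < n - k - 1 →
      ∀ T : Submodule L (Vn ⧸ LinearMap.BilinForm.orthogonal σ Γ),
        Module.finrank L ↥T = 1 → wt Ud T ≤ 1) :=
  statement11_general n k hkn hVn W hW hWstar σ hσnd hσrefl hσW Γ hΓ hΓW U hU Ud hUd ε hε hεlt
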